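/- arXiv:2109.10029 — 8 statements merged into one kernel-verified Lean document; each statement's English description precedes it below -/
import Mathlib

section
/- Let (X,d) be a metric space and {f_ν} a sequence of self-maps with a common Lipschitz constant ℓ ∈ (0,1), where each f_ν has a fixed point x_ν ∈ X. If the sequence {x_ν} converges to some x_∞ ∈ X, then the left iterated function system L_ν = f_ν ∘ ⋯ ∘ f_0 converges pointwise to the constant x_∞. -/
open Filter Topology

variable {X : Type*}

/-- Left iterated function system: `LFS f ν = f ν ∘ f (ν-1) ∘ ⋯ ∘ f 0`. -/
def LFS (f : ℕ → X → X) : ℕ → X → X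
  | 0 => f 0
  | n + 1 => f (n + 1) ∘ LFS f n

/-- A nonnegative sequence satisfying `a (n+1) ≤ ℓ * a n + ε n` with `ε → 0` and
`0 ≤ ℓ < 1` tends to zero. -/
lemma aux_tendsto_zero (a ε : ℕ → ℝ) (ha : ∀ n, 0 ≤ a n)
    (ℓ : ℝ) (hℓ0 : 0 ≤ ℓ) (hℓ1 : ℓ < 1)
    (hrec : ∀ n, a (n + 1) ≤ ℓ * a n + ε n)
    (hε : Tendsto ε atTop (𝓝 0)) :
    Tendsto a atTop (𝓝 0) := by
  rw [Metric.tendsto_atTop]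
  intro δ hδ
  have hc : (0:ℝ) < (1 - ℓ) * (δ / 2) := mul_pos (by linarith) (by linarith)
  obtain ⟨N, hN⟩ := (Metric.tendsto_atTop.1 hε) _ hc
  -- claim: a (N + k) ≤ ℓ^k * a N + δ/2
  have claim : ∀ k, a (N + k) ≤ ℓ ^ k * a N + δ / 2 := by
    intro k
    induction k with
    | zero => simp; linarith [ha N]
    | succ k ih =>
      have h1 := hrec (N + k)
      have h2 := hN (N + k) (Nat.le_add_right N k)
      have h3 : ε (N + k) < (1 - ℓ) * (δ / 2) := by
        rw [Real.dist_eq, sub_zero] at h2; exact (abs_lt.1 h2).2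
      have : a (N + k + 1) ≤ ℓ * (ℓ ^ k * a N + δ / 2) + (1 - ℓ) * (δ / 2) := by
        calc a (N + k + 1) ≤ ℓ * a (N + k) + ε (N + k) := h1
          _ ≤ ℓ * (ℓ ^ k * a N + δ / 2) + (1 - ℓ) * (δ / 2) := by
              have := mul_le_mul_of_nonneg_left ih hℓ0
              linarith
      have heq : N + (k + 1) = N + k + 1 := by ring
      rw [heq]
      calc a (N + k + 1) ≤ ℓ * (ℓ ^ k * a N + δ / 2) + (1 - ℓ) * (δ / 2) := this
        _ = ℓ ^ (k + 1) * a N + δ / 2 := by ring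
  -- choose K with ℓ^K * a N < δ/2
  have hpow : Tendsto (fun k => ℓ ^ k * a N) atTop (𝓝 0) := by
    simpa using (tendsto_pow_atTop_nhds_zero_of_lt_one hℓ0 hℓ1).mul_const (a N)
  obtain ⟨K, hK⟩ := (Metric.tendsto_atTop.1 hpow) (δ / 2) (by linarith)
  refine ⟨N + K, fun n hn => ?_⟩
  obtain ⟨k, rfl⟩ := Nat.exists_eq_add_of_le (le_trans (Nat.le_add_right N K) hn)
  have hk : K ≤ k := by omega
  have h1 := claim k
  have h2 := hK k hk
  rw [Real.dist_eq, sub_zero] at h2 ⊢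
  have h2' : ℓ ^ k * a N < δ / 2 := lt_of_abs_lt h2
  rw [abs_of_nonneg (ha _)]
  linarith

/-- If the fixed points `x ν` of uniformly `ℓ`-Lipschitz self-maps `f ν` (`0 < ℓ < 1`)
converge to `xlim`, then the left iterated function system converges pointwise to the
constant `xlim`. -/
theorem stmt2 [MetricSpace X] (f : ℕ → X → X)
    (ℓ : ℝ) (hℓ0 : 0 < ℓ) (hℓ1 : ℓ < 1)
    (hlip : ∀ ν x y, dist (f ν x) (f ν y) ≤ ℓ * dist x y)
    (x : ℕ → X) (hfix : ∀ ν, f ν (x ν) = x ν)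
    (xlim : X) (hx : Tendsto x atTop (𝓝 xlim)) :
    ∀ z, Tendsto (fun ν => LFS f ν z) atTop (𝓝 xlim) := by
  intro z
  set a : ℕ → ℝ := fun ν => dist (LFS f ν z) (x ν) with ha_def
  have hε : Tendsto (fun ν => ℓ * dist (x ν) (x (ν + 1))) atTop (𝓝 0) := by
    have h1 : Tendsto (fun ν => x (ν + 1)) atTop (𝓝 xlim) :=
      hx.comp (tendsto_add_atTop_nat 1)
    have := (hx.dist h1)
    simp only [dist_self] at this
    simpa using this.const_mul ℓ
  have hrec : ∀ n, a (n + 1) ≤ ℓ * a n + ℓ * dist (x n) (x (n + 1)) := by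
    intro n
    have h1 : a (n + 1) = dist (f (n + 1) (LFS f n z)) (f (n + 1) (x (n + 1))) := by
      simp [ha_def, LFS, hfix]
    rw [h1]
    calc dist (f (n + 1) (LFS f n z)) (f (n + 1) (x (n + 1)))
        ≤ ℓ * dist (LFS f n z) (x (n + 1)) := hlip _ _ _
      _ ≤ ℓ * (dist (LFS f n z) (x n) + dist (x n) (x (n + 1))) := by
          exact mul_le_mul_of_nonneg_left (dist_triangle _ _ _) hℓ0.le
      _ = ℓ * a n + ℓ * dist (x n) (x (n + 1)) := by ring
  have ha0 : Tendsto a atTop (𝓝 0) :=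
    aux_tendsto_zero a _ (fun n => dist_nonneg) ℓ hℓ0.le hℓ1 hrec hε
  rw [tendsto_iff_dist_tendsto_zero]
  have hxd : Tendsto (fun ν => dist (x ν) xlim) atTop (𝓝 0) := by
    have := hx.dist (tendsto_const_nhds (x := xlim))
    simpa using this
  apply squeeze_zero (fun n => dist_nonneg) (fun n => dist_triangle (LFS f n z) (x n) xlim)
  simpa using ha0.add hxd
end

section
/- Let (X,d) be a metric space and {f_ν} a sequence of self-maps with a common Lipschitz constant ℓ ∈ (0,1), where each f_ν has a fixed point x_ν ∈ X. If the left iterated function system L_ν = f_ν ∘ ⋯ ∘ f_0 converges pointwise to a constant x_∞ ∈ X, then x_ν → x_∞. -/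
open Filter Topology

variable {X : Type*}

/-- If the left iterated function system generated by uniformly `ℓ`-Lipschitz self-maps
(`0 < ℓ < 1`) with fixed points `x ν` converges pointwise to the constant `xlim`, then the
fixed points converge to `xlim`. -/
theorem stmt3 [MetricSpace X] (f : ℕ → X → X)
    (ℓ : ℝ) (hℓ0 : 0 < ℓ) (hℓ1 : ℓ < 1)
    (hlip : ∀ ν x y, dist (f ν x) (f ν y) ≤ ℓ * dist x y)
    (x : ℕ → X) (hfix : ∀ ν, f ν (x ν) = x ν)
    (xlim : X) (hL : ∀ z, Tendsto (fun ν => LFS f ν z) atTop (𝓝 xlim)) :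
    Tendsto x atTop (𝓝 xlim) := by
  set g : ℕ → ℝ := fun ν => dist (LFS f ν xlim) xlim with hg
  have hg0 : Tendsto g atTop (𝓝 0) := by
    simpa using (tendsto_iff_dist_tendsto_zero.mp (hL xlim))
  have key : ∀ ν, dist (x (ν + 1)) xlim ≤ (ℓ * g ν + g (ν + 1)) / (1 - ℓ) := by
    intro ν
    set a := dist (x (ν + 1)) xlim with ha
    have h1 : a ≤ dist (x (ν + 1)) (LFS f (ν + 1) xlim) + g (ν + 1) :=
      dist_triangle _ _ _
    have h2 : dist (x (ν + 1)) (LFS f (ν + 1) xlim) ≤ ℓ * (a + g ν) := by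
      have : dist (x (ν + 1)) (LFS f (ν + 1) xlim)
          = dist (f (ν + 1) (x (ν + 1))) (f (ν + 1) (LFS f ν xlim)) := by
        rw [hfix]; rfl
      rw [this]
      calc dist (f (ν + 1) (x (ν + 1))) (f (ν + 1) (LFS f ν xlim))
          ≤ ℓ * dist (x (ν + 1)) (LFS f ν xlim) := hlip _ _ _
        _ ≤ ℓ * (a + g ν) := by
            exact mul_le_mul_of_nonneg_left (dist_triangle_right _ _ _) hℓ0.le
    have h3 : (1 - ℓ) * a ≤ ℓ * g ν + g (ν + 1) := by nlinarith
    rw [le_div_iff₀ (by linarith)]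
    linarith
  have hbound : Tendsto (fun ν => (ℓ * g ν + g (ν + 1)) / (1 - ℓ)) atTop (𝓝 0) := by
    have : Tendsto (fun ν => g (ν + 1)) atTop (𝓝 0) :=
      hg0.comp (tendsto_add_atTop_nat 1)
    have h := ((hg0.const_mul ℓ).add this).div_const (1 - ℓ)
    simpa using h
  have hshift : Tendsto (fun ν => x (ν + 1)) atTop (𝓝 xlim) := by
    rw [tendsto_iff_dist_tendsto_zero]
    exact squeeze_zero (fun ν => dist_nonneg) key hbound
  exact (tendsto_add_atTop_iff_nat 1).mp hshift
end

section
/- Let (X,d) be a complete metric space and ℓ ∈ (0,1). Suppose {f_ν} is a sequence of ℓ-Lipschitz self-maps of X whose fixed points x_ν converge in X. Then the sequence of compositions L_ν = f_ν ∘ ⋯ ∘ f_0 converges uniformly on compact sets to the constant map at lim x_ν. -/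
open Filter Topology

variable {X : Type*}

private lemma aux_tendsto {ℓ : ℝ} (hℓ0 : 0 ≤ ℓ) (hℓ1 : ℓ < 1) (c d : ℕ → ℝ)
    (hcnn : ∀ n, 0 ≤ c n)
    (hrec : ∀ n, c (n + 1) ≤ ℓ * c n + d n)
    (hd : Tendsto d atTop (𝓝 0)) : Tendsto c atTop (𝓝 0) := by
  rw [Metric.tendsto_atTop]
  intro ε hε
  have hsub : 0 < 1 - ℓ := by linarith
  have hε2 : 0 < (1 - ℓ) * ε / 2 := by positivity
  obtain ⟨N, hN⟩ := Metric.tendsto_atTop.1 hd ((1 - ℓ) * ε / 2) hε2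
  have key : ∀ m, c (N + m) ≤ ℓ ^ m * c N + ε / 2 := by
    intro m
    induction m with
    | zero => simp; linarith
    | succ m ih =>
      have hdm : d (N + m) ≤ (1 - ℓ) * ε / 2 := by
        have := hN (N + m) (Nat.le_add_right _ _)
        rw [Real.dist_eq] at this
        have := (abs_lt.mp this).2
        linarith
      have h1 : c (N + (m + 1)) ≤ ℓ * c (N + m) + d (N + m) := by
        have := hrec (N + m); rwa [show N + (m + 1) = N + m + 1 by ring]
      have h2 : ℓ * c (N + m) ≤ ℓ * (ℓ ^ m * c N + ε / 2) :=
        mul_le_mul_of_nonneg_left ih hℓ0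
      have : c (N + (m + 1)) ≤ ℓ ^ (m + 1) * c N + ℓ * (ε / 2) + (1 - ℓ) * ε / 2 := by
        rw [pow_succ]; nlinarith
      nlinarith
  have hpow : Tendsto (fun m => ℓ ^ m * c N) atTop (𝓝 0) := by
    simpa using (tendsto_pow_atTop_nhds_zero_of_lt_one hℓ0 hℓ1).mul_const (c N)
  obtain ⟨M, hM⟩ := Metric.tendsto_atTop.1 hpow (ε / 2) (by linarith)
  refine ⟨N + M, fun n hn => ?_⟩
  have hm : M ≤ n - N := by omega
  have hn' : n = N + (n - N) := by omega
  have h1 := key (n - N)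
  have h2 := hM (n - N) hm
  rw [Real.dist_eq, abs_lt] at h2 ⊢
  constructor
  · have := hcnn n; linarith
  · rw [hn']; simp only [sub_zero] at *; linarith [h2.2]

/-- On a complete metric space, if the fixed points of uniformly `ℓ`-Lipschitz self-maps
(`0 < ℓ < 1`) converge to `xlim`, then the left iterated function system converges to the
constant `xlim` uniformly on every compact set. -/
theorem stmt4 [MetricSpace X] [CompleteSpace X] (f : ℕ → X → X)
    (ℓ : ℝ) (hℓ0 : 0 < ℓ) (hℓ1 : ℓ < 1)
    (hlip : ∀ ν x y, dist (f ν x) (f ν y) ≤ ℓ * dist x y)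
    (x : ℕ → X) (hfix : ∀ ν, f ν (x ν) = x ν)
    (xlim : X) (hx : Tendsto x atTop (𝓝 xlim)) :
    ∀ K : Set X, IsCompact K →
      TendstoUniformlyOn (fun ν z => LFS f ν z) (fun _ => xlim) atTop K := by
  intro K hK
  obtain ⟨r, hr⟩ := hK.isBounded.subset_closedBall (x 0)
  set D : ℝ := max r 0 with hD
  have hD0 : 0 ≤ D := le_max_right _ _
  set c : ℕ → ℝ := fun n =>
    Nat.rec (ℓ * D) (fun n cn => ℓ * cn + ℓ * dist (x n) (x (n + 1))) n with hc
  have hc0 : c 0 = ℓ * D := rfl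
  have hcs : ∀ n, c (n + 1) = ℓ * c n + ℓ * dist (x n) (x (n + 1)) := fun n => rfl
  have hcnn : ∀ n, 0 ≤ c n := by
    intro n
    induction n with
    | zero => rw [hc0]; positivity
    | succ n ih =>
      rw [hcs]
      have := dist_nonneg (x := x n) (y := x (n + 1))
      positivity
  have hbound : ∀ n, ∀ z ∈ K, dist (LFS f n z) (x n) ≤ c n := by
    intro n
    induction n with
    | zero =>
      intro z hz
      have hz0 : dist z (x 0) ≤ D := le_trans (Metric.mem_closedBall.mp (hr hz)) (le_max_left _ _)
      calc dist (LFS f 0 z) (x 0) = dist (f 0 z) (f 0 (x 0)) := by rw [hfix]; rfl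
        _ ≤ ℓ * dist z (x 0) := hlip 0 z (x 0)
        _ ≤ ℓ * D := mul_le_mul_of_nonneg_left hz0 hℓ0.le
        _ = c 0 := hc0.symm
    | succ n ih =>
      intro z hz
      calc dist (LFS f (n + 1) z) (x (n + 1))
          = dist (f (n + 1) (LFS f n z)) (f (n + 1) (x (n + 1))) := by rw [hfix]; rfl
        _ ≤ ℓ * dist (LFS f n z) (x (n + 1)) := hlip _ _ _
        _ ≤ ℓ * (dist (LFS f n z) (x n) + dist (x n) (x (n + 1))) :=
            mul_le_mul_of_nonneg_left (dist_triangle _ _ _) hℓ0.le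
        _ ≤ ℓ * (c n + dist (x n) (x (n + 1))) := by
            have := ih z hz
            nlinarith [dist_nonneg (x := x n) (y := x (n + 1))]
        _ = c (n + 1) := by rw [hcs]; ring
  have hdten : Tendsto (fun n => ℓ * dist (x n) (x (n + 1))) atTop (𝓝 0) := by
    have h1 : Tendsto (fun n => x (n + 1)) atTop (𝓝 xlim) :=
      hx.comp (tendsto_add_atTop_nat 1)
    have h2 : Tendsto (fun n => dist (x n) (x (n + 1))) atTop (𝓝 (dist xlim xlim)) :=
      hx.dist h1
    simpa using h2.const_mul ℓ
  have hctend : Tendsto c atTop (𝓝 0) :=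
    aux_tendsto hℓ0.le hℓ1 c _ hcnn (fun n => (hcs n).le) hdten
  have hxd : Tendsto (fun n => dist (x n) xlim) atTop (𝓝 0) :=
    tendsto_iff_dist_tendsto_zero.mp hx
  have htot : Tendsto (fun n => c n + dist (x n) xlim) atTop (𝓝 0) := by
    simpa using hctend.add hxd
  rw [Metric.tendstoUniformlyOn_iff]
  intro ε hε
  filter_upwards [htot.eventually (gt_mem_nhds hε)] with n hn z hz
  have h1 := hbound n z hz
  calc dist xlim (LFS f n z) ≤ dist xlim (x n) + dist (x n) (LFS f n z) := dist_triangle _ _ _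
    _ ≤ c n + dist (x n) xlim := by
        rw [dist_comm xlim (x n), dist_comm (x n) (LFS f n z)]; linarith
    _ < ε := hn
end

section
/- Let (X,d) be a metric space, ℓ ∈ (0,1), and {f_ν} a sequence of ℓ-Lipschitz self-maps of X with fixed points x_ν. For all ν ≥ 1 and x ∈ X, d(L_ν(x), x_ν) ≤ ℓ^{ν+1}·d(x, x_0) + Σ_{j=0}^{ν-1} ℓ^{ν-j}·d(x_j, x_{j+1}), where L_ν = f_ν ∘ ⋯ ∘ f_0. -/
open Filter Topology Finset

variable {X : Type*}

theorem le_pow_mul_add_sum_of_le_mul_add {a b : ℕ → ℝ} {ℓ c : ℝ} (hℓ : 0 ≤ ℓ)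
    (h0 : a 0 ≤ ℓ * c) (hstep : ∀ n, a (n + 1) ≤ ℓ * (a n + b n)) (n : ℕ) :
    a n ≤ ℓ ^ (n + 1) * c + ∑ j ∈ range n, ℓ ^ (n - j) * b j := by
  induction n with
  | zero => simpa using h0
  | succ n ih =>
    have hpow : ∀ j ∈ range n, ℓ ^ (n + 1 - j) * b j = ℓ * (ℓ ^ (n - j) * b j) := by
      intro j hj
      rw [Nat.sub_add_comm (mem_range.mp hj).le, pow_succ]
      ring
    calc a (n + 1) ≤ ℓ * (a n + b n) := hstep n
      _ ≤ ℓ * (ℓ ^ (n + 1) * c + ∑ j ∈ range n, ℓ ^ (n - j) * b j + b n) := by gcongr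
      _ = ℓ ^ (n + 1 + 1) * c + ∑ j ∈ range (n + 1), ℓ ^ (n + 1 - j) * b j := by
        rw [sum_range_succ, sum_congr rfl hpow, ← mul_sum, Nat.add_sub_cancel_left,
          pow_succ _ (n + 1)]
        ring

section FixedPoints

variable [PseudoMetricSpace X] {f : ℕ → X → X} {ℓ : ℝ} {x : ℕ → X}

theorem dist_apply_fixedPoint_le (hlip : ∀ ν x y, dist (f ν x) (f ν y) ≤ ℓ * dist x y)
    (hfix : ∀ ν, f ν (x ν) = x ν) (ν : ℕ) (y : X) :
    dist (f ν y) (x ν) ≤ ℓ * dist y (x ν) := by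
  simpa only [hfix] using hlip ν y (x ν)

theorem dist_LFS_succ_le (hℓ : 0 ≤ ℓ)
    (hlip : ∀ ν x y, dist (f ν x) (f ν y) ≤ ℓ * dist x y)
    (hfix : ∀ ν, f ν (x ν) = x ν) (n : ℕ) (z : X) :
    dist (LFS f (n + 1) z) (x (n + 1)) ≤
      ℓ * (dist (LFS f n z) (x n) + dist (x n) (x (n + 1))) :=
  calc dist (LFS f (n + 1) z) (x (n + 1))
      ≤ ℓ * dist (LFS f n z) (x (n + 1)) := dist_apply_fixedPoint_le hlip hfix _ _
    _ ≤ ℓ * (dist (LFS f n z) (x n) + dist (x n) (x (n + 1))) := by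
      gcongr
      exact dist_triangle _ _ _

end FixedPoints

theorem stmt5_general [MetricSpace X] (f : ℕ → X → X)
    (ℓ : ℝ) (hℓ0 : 0 < ℓ)
    (hlip : ∀ ν x y, dist (f ν x) (f ν y) ≤ ℓ * dist x y)
    (x : ℕ → X) (hfix : ∀ ν, f ν (x ν) = x ν) :
    ∀ ν, 1 ≤ ν → ∀ z : X,
      dist (LFS f ν z) (x ν) ≤
        ℓ ^ (ν + 1) * dist z (x 0) +
          ∑ j ∈ Finset.range ν, ℓ ^ (ν - j) * dist (x j) (x (j + 1)) :=
  fun ν _ z =>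
    le_pow_mul_add_sum_of_le_mul_add (a := fun n => dist (LFS f n z) (x n))
      (b := fun n => dist (x n) (x (n + 1))) hℓ0.le (dist_apply_fixedPoint_le hlip hfix 0 z)
      (fun n => dist_LFS_succ_le hℓ0.le hlip hfix n z) ν

/-- Quantitative estimate: for `ℓ`-Lipschitz self-maps `f ν` with fixed points `x ν`,
`d(L_ν(x), x_ν) ≤ ℓ^(ν+1) d(x, x_0) + ∑_{j<ν} ℓ^(ν-j) d(x_j, x_{j+1})` for all `ν ≥ 1`. -/
theorem stmt5 [MetricSpace X] (f : ℕ → X → X)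
    (ℓ : ℝ) (hℓ0 : 0 < ℓ) (hℓ1 : ℓ < 1)
    (hlip : ∀ ν x y, dist (f ν x) (f ν y) ≤ ℓ * dist x y)
    (x : ℕ → X) (hfix : ∀ ν, f ν (x ν) = x ν) :
    ∀ ν, 1 ≤ ν → ∀ z : X,
      dist (LFS f ν z) (x ν) ≤
        ℓ ^ (ν + 1) * dist z (x 0) +
          ∑ j ∈ Finset.range ν, ℓ ^ (ν - j) * dist (x j) (x (j + 1)) :=
  stmt5_general f ℓ hℓ0 hlip x hfix
end

section
/- Let (X,d) be a metric space and suppose {f_ν} are self-maps of X with common Lipschitz constant ℓ ∈ (0,1) and fixed points x_ν. If L_ν = f_ν ∘ ⋯ ∘ f_0 converges pointwise to the constant x_∞ and there exist r > 0 and a subsequence with d(x_{ν_k}, x_∞) > r for all k, then one derives the contradiction d(x_{ν_k}, x_∞) ≤ r for large k; hence d(x_ν, x_∞) → 0. -/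
open Filter Topology

variable {X : Type*}

/-- If the left iterated function system generated by uniformly `ℓ`-Lipschitz self-maps
(`0 < ℓ < 1`) with fixed points `x ν` converges pointwise to the constant `xlim`, then
`d(x_ν, x_∞) → 0` (no subsequence can stay at distance `> r` from `xlim`). -/
theorem stmt12 [MetricSpace X] (f : ℕ → X → X)
    (ℓ : ℝ) (hℓ0 : 0 < ℓ) (hℓ1 : ℓ < 1)
    (hlip : ∀ ν x y, dist (f ν x) (f ν y) ≤ ℓ * dist x y)
    (x : ℕ → X) (hfix : ∀ ν, f ν (x ν) = x ν)
    (xlim : X) (hL : ∀ z, Tendsto (fun ν => LFS f ν z) atTop (𝓝 xlim)) :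
    Tendsto (fun ν => dist (x ν) xlim) atTop (𝓝 0) := by
  set a : ℕ → ℝ := fun ν => dist (LFS f ν xlim) xlim with ha
  have haz : Tendsto a atTop (𝓝 0) := (tendsto_iff_dist_tendsto_zero).mp (hL xlim)
  have haz' : Tendsto (fun ν => a (ν + 1)) atTop (𝓝 0) :=
    haz.comp (tendsto_add_atTop_nat 1)
  have key : ∀ ν, dist (x (ν + 1)) xlim ≤ (ℓ * a ν + a (ν + 1)) / (1 - ℓ) := by
    intro ν
    have h1 : dist (x (ν + 1)) xlim ≤ dist (x (ν + 1)) (LFS f (ν + 1) xlim) + a (ν + 1) :=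
      dist_triangle _ _ _
    have h2 : dist (x (ν + 1)) (LFS f (ν + 1) xlim)
        ≤ ℓ * (dist (x (ν + 1)) xlim + a ν) := by
      have : dist (x (ν + 1)) (LFS f (ν + 1) xlim)
          = dist (f (ν + 1) (x (ν + 1))) (f (ν + 1) (LFS f ν xlim)) := by
        rw [hfix]; rfl
      rw [this]
      calc dist (f (ν + 1) (x (ν + 1))) (f (ν + 1) (LFS f ν xlim))
          ≤ ℓ * dist (x (ν + 1)) (LFS f ν xlim) := hlip _ _ _
        _ ≤ ℓ * (dist (x (ν + 1)) xlim + a ν) := by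
            have ht : dist (x (ν + 1)) (LFS f ν xlim) ≤ dist (x (ν + 1)) xlim + a ν := by
              simpa [ha, dist_comm] using dist_triangle (x (ν + 1)) xlim (LFS f ν xlim)
            exact mul_le_mul_of_nonneg_left ht hℓ0.le
    have h3 : (1 - ℓ) * dist (x (ν + 1)) xlim ≤ ℓ * a ν + a (ν + 1) := by nlinarith
    rw [le_div_iff₀ (by linarith)]
    linarith [h3]
  have hb : Tendsto (fun ν => (ℓ * a ν + a (ν + 1)) / (1 - ℓ)) atTop (𝓝 0) := by
    have := ((haz.const_mul ℓ).add haz').div_const (1 - ℓ)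
    simpa using this
  have hshift : Tendsto (fun ν => dist (x (ν + 1)) xlim) atTop (𝓝 0) :=
    squeeze_zero (fun ν => dist_nonneg) key hb
  exact (tendsto_add_atTop_iff_nat 1).mp hshift
end

section
/- Let (X, ω) be a metric space, F : X → X 1-Lipschitz, and {f_ν} a sequence of 1-Lipschitz self-maps of X such that ω(f_ν(z), F(z)) < 2^{-(ν+1)} whenever ω(z, z₀) ≤ 1 + ω(F^ν(z₀), z₀). Then the compositions L_ν = f_ν ∘ ⋯ ∘ f_0 satisfy ω(L_ν(z₀), F^{ν+1}(z₀)) < 1 − 2^{-(ν+1)} for all ν ∈ ℕ. -/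
open Filter Topology

variable {X : Type*}

/-- If `F` is `1`-Lipschitz and `ω(f_ν(z), F(z)) < 2^{-(ν+1)}` for every `z` with
`ω(z, z₀) ≤ 1 + ω(F^ν(z₀), z₀)`, then `ω(L_ν(z₀), F^{ν+1}(z₀)) < 1 − 2^{-(ν+1)}`
for all `ν`. -/
theorem stmt15 [MetricSpace X] (z₀ : X)
    (F : X → X) (hF : ∀ x y, dist (F x) (F y) ≤ dist x y)
    (f : ℕ → X → X)
    (hf : ∀ ν, ∀ z : X, dist z z₀ ≤ 1 + dist (F^[ν] z₀) z₀ →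
      dist (f ν z) (F z) < (1 / 2 : ℝ) ^ (ν + 1)) :
    ∀ ν, dist (LFS f ν z₀) (F^[ν + 1] z₀) < 1 - (1 / 2 : ℝ) ^ (ν + 1) := by
  intro ν
  induction ν with
  | zero =>
    have h := hf 0 z₀ (by simp [dist_nonneg])
    show dist (f 0 z₀) (F^[1] z₀) < 1 - (1/2:ℝ) ^ 1
    rw [Function.iterate_one]
    norm_num at h ⊢
    linarith
  | succ n ih =>
    have hL : dist (LFS f n z₀) z₀ ≤ 1 + dist (F^[n + 1] z₀) z₀ := by
      calc dist (LFS f n z₀) z₀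
          ≤ dist (LFS f n z₀) (F^[n + 1] z₀) + dist (F^[n + 1] z₀) z₀ :=
            dist_triangle _ _ _
        _ ≤ 1 + dist (F^[n + 1] z₀) z₀ := by
            have : (0:ℝ) < (1/2:ℝ) ^ (n+1) := by positivity
            linarith [ih]
    have h1 := hf (n + 1) (LFS f n z₀) hL
    have h2 : dist (F (LFS f n z₀)) (F^[n + 2] z₀) ≤ dist (LFS f n z₀) (F^[n + 1] z₀) := by
      have := hF (LFS f n z₀) (F^[n + 1] z₀)
      simpa [Function.iterate_succ_apply'] using this
    have htri : dist (LFS f (n + 1) z₀) (F^[n + 2] z₀)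
        ≤ dist (f (n + 1) (LFS f n z₀)) (F (LFS f n z₀)) + dist (F (LFS f n z₀)) (F^[n + 2] z₀) := by
      simpa [LFS] using dist_triangle (f (n + 1) (LFS f n z₀)) (F (LFS f n z₀)) (F^[n + 2] z₀)
    have hpow : (1/2:ℝ) ^ (n + 2) = (1/2:ℝ) ^ (n+1) * (1/2) := by ring
    have := htri.trans_lt (by linarith [ih] : _ < 1 - (1/2:ℝ) ^ (n + 2))
    simpa using this
end

section
/- Let (X, ω) be a metric space, D ⊆ X compact, F : X → X a map with F(D) ⊆ D that is a k-contraction on D for some k ∈ (0,1), with fixed point z₀ ∈ D, and let {f_ν} be self-maps of X with f_ν(D) ⊆ D such that sup_{w ∈ D} ω(f_ν(w), F(w)) → 0. Then for every z ∈ D, ω(L_ν(z), F^ν(z)) → 0, and hence L_ν(z) → z₀, where L_ν = f_ν ∘ ⋯ ∘ f_0. -/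
open Filter Topology

variable {X : Type*}

private lemma aux_rec (k : ℝ) (hk0 : 0 ≤ k) (hk1 : k < 1) (a ε : ℕ → ℝ)
    (ha0 : ∀ n, 0 ≤ a n) (hrec : ∀ n, a (n + 1) ≤ k * a n + ε (n + 1))
    (hε0 : Tendsto ε atTop (𝓝 0)) : Tendsto a atTop (𝓝 0) := by
  rw [Metric.tendsto_atTop]
  intro δ hδ
  have hc : (0:ℝ) < (1 - k) * (δ / 2) := mul_pos (by linarith) (by linarith)
  obtain ⟨N, hN⟩ := (Metric.tendsto_atTop.mp hε0 _ hc)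
  have key : ∀ m, a (N + m) ≤ k ^ m * a N + δ / 2 := by
    intro m
    induction m with
    | zero => simp; linarith
    | succ m ih =>
      have h1 : a (N + m + 1) ≤ k * a (N + m) + ε (N + m + 1) := hrec (N + m)
      have h2 : ε (N + m + 1) ≤ (1 - k) * (δ / 2) := by
        have := hN (N + m + 1) (by omega)
        rw [Real.dist_eq, sub_zero] at this
        exact le_trans (le_abs_self _) this.le
      have h3 : k * a (N + m) ≤ k * (k ^ m * a N + δ / 2) :=
        mul_le_mul_of_nonneg_left ih hk0
      have : a (N + (m + 1)) = a (N + m + 1) := by ring_nf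
      rw [this, pow_succ]
      nlinarith
  have hpow : Tendsto (fun m => k ^ m * a N) atTop (𝓝 0) := by
    simpa using (tendsto_pow_atTop_nhds_zero_of_lt_one hk0 hk1).mul_const (a N)
  obtain ⟨M, hM⟩ := (Metric.tendsto_atTop.mp hpow (δ / 2) (by linarith))
  refine ⟨N + M, fun n hn => ?_⟩
  have hm : n = N + (n - N) := by omega
  have h1 := key (n - N)
  have h2 := hM (n - N) (by omega)
  rw [Real.dist_eq, sub_zero] at h2 ⊢
  rw [abs_of_nonneg (ha0 n)]
  have h3 : k ^ (n - N) * a N < δ / 2 := lt_of_le_of_lt (le_abs_self _) h2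
  rw [← hm] at h1
  linarith

/-- Let `D` be compact and invariant under a `k`-contraction `F` (on `D`) with fixed
point `z₀ ∈ D`, and let `f ν` map `D` into `D` with `sup_{w ∈ D} ω(f_ν(w), F(w)) → 0`.
Then for every `z ∈ D`, `ω(L_ν(z), F^ν(z)) → 0` and `L_ν(z) → z₀`. -/
theorem stmt16 [MetricSpace X] (D : Set X) (hDc : IsCompact D)
    (F : X → X) (hFD : Set.MapsTo F D D)
    (k : ℝ) (hk0 : 0 < k) (hk1 : k < 1)
    (hF : ∀ z ∈ D, ∀ w ∈ D, dist (F z) (F w) ≤ k * dist z w)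
    (z₀ : X) (hz₀ : z₀ ∈ D) (hfixed : F z₀ = z₀)
    (f : ℕ → X → X) (hfD : ∀ ν, Set.MapsTo (f ν) D D)
    (ε : ℕ → ℝ) (hε : ∀ ν, ∀ w ∈ D, dist (f ν w) (F w) ≤ ε ν)
    (hε0 : Tendsto ε atTop (𝓝 0)) :
    ∀ z ∈ D, Tendsto (fun ν => dist (LFS f ν z) (F^[ν] z)) atTop (𝓝 0) ∧
      Tendsto (fun ν => LFS f ν z) atTop (𝓝 z₀) := by
  intro z hz
  -- memberships
  have hFit : ∀ n, F^[n] z ∈ D := by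
    intro n; induction n with
    | zero => simpa using hz
    | succ n ih => rw [Function.iterate_succ_apply']; exact hFD ih
  have hLD : ∀ n, LFS f n z ∈ D := by
    intro n; induction n with
    | zero => exact hfD 0 hz
    | succ n ih => exact hfD (n + 1) ih
  set a : ℕ → ℝ := fun ν => dist (LFS f ν z) (F^[ν] z) with ha
  have hrec : ∀ n, a (n + 1) ≤ k * a n + ε (n + 1) := by
    intro n
    have h1 : a (n + 1) = dist (f (n + 1) (LFS f n z)) (F (F^[n] z)) := by
      simp [ha, LFS, Function.iterate_succ_apply']
    rw [h1]
    calc dist (f (n + 1) (LFS f n z)) (F (F^[n] z))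
        ≤ dist (f (n + 1) (LFS f n z)) (F (LFS f n z))
            + dist (F (LFS f n z)) (F (F^[n] z)) := dist_triangle _ _ _
      _ ≤ ε (n + 1) + k * a n := by
          gcongr
          · exact hε (n + 1) _ (hLD n)
          · exact hF _ (hLD n) _ (hFit n)
      _ = k * a n + ε (n + 1) := by ring
  have h1 : Tendsto a atTop (𝓝 0) :=
    aux_rec k hk0.le hk1 a ε (fun n => dist_nonneg) hrec hε0
  refine ⟨h1, ?_⟩
  have hit : ∀ n, dist (F^[n] z) z₀ ≤ k ^ n * dist z z₀ := by
    intro n; induction n with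
    | zero => simp
    | succ n ih =>
      rw [Function.iterate_succ_apply']
      calc dist (F (F^[n] z)) z₀ = dist (F (F^[n] z)) (F z₀) := by rw [hfixed]
        _ ≤ k * dist (F^[n] z) z₀ := hF _ (hFit n) _ hz₀
        _ ≤ k * (k ^ n * dist z z₀) := by
            exact mul_le_mul_of_nonneg_left ih hk0.le
        _ = k ^ (n + 1) * dist z z₀ := by ring
  rw [tendsto_iff_dist_tendsto_zero]
  have hbound : ∀ n, dist (LFS f n z) z₀ ≤ a n + k ^ n * dist z z₀ := fun n =>
    le_trans (dist_triangle _ _ _) (by gcongr; exact hit n)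
  have h2 : Tendsto (fun n => a n + k ^ n * dist z z₀) atTop (𝓝 0) := by
    have := (tendsto_pow_atTop_nhds_zero_of_lt_one hk0.le hk1).mul_const (dist z z₀)
    simpa using h1.add this
  exact squeeze_zero (fun n => dist_nonneg) hbound h2
end

section
/- Let ℓ ∈ (0,1), let (X,d) be a metric space, and let {f_ν} be ℓ-Lipschitz self-maps of X with fixed points x_ν such that M := sup_j d(x_j, x_{j+1}) < ∞. Then for every x ∈ X the sequence {L_ν(x)} is bounded, where L_ν = f_ν ∘ ⋯ ∘ f_0: indeed d(L_ν(x), x_ν) ≤ ℓ^{ν+1} d(x, x₀) + M·ℓ/(1−ℓ). -/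
open Filter Topology

variable {X : Type*}

/-- If the `ℓ`-Lipschitz self-maps `f ν` (`0 < ℓ < 1`) have fixed points `x ν` with
consecutive distances bounded by `M`, then for every `x`,
`d(L_ν(x), x_ν) ≤ ℓ^{ν+1} d(x, x₀) + M ℓ/(1−ℓ)`, so `L_ν(x)` stays at bounded distance
from `x_ν`. -/
theorem stmt17 [MetricSpace X] (f : ℕ → X → X)
    (ℓ : ℝ) (hℓ0 : 0 < ℓ) (hℓ1 : ℓ < 1)
    (hlip : ∀ ν x y, dist (f ν x) (f ν y) ≤ ℓ * dist x y)
    (x : ℕ → X) (hfix : ∀ ν, f ν (x ν) = x ν)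
    (M : ℝ) (hM : ∀ j, dist (x j) (x (j + 1)) ≤ M) :
    ∀ z : X, (∀ ν, dist (LFS f ν z) (x ν) ≤ ℓ ^ (ν + 1) * dist z (x 0) + M * ℓ / (1 - ℓ)) ∧
      ∃ C : ℝ, ∀ ν, dist (LFS f ν z) (x ν) ≤ C := by
  intro z
  have hM0 : 0 ≤ M := le_trans dist_nonneg (hM 0)
  have h1ℓ : 0 < 1 - ℓ := by linarith
  have hT : 0 ≤ M * ℓ / (1 - ℓ) := by positivity
  have key : ∀ ν, dist (LFS f ν z) (x ν) ≤ ℓ ^ (ν + 1) * dist z (x 0) + M * ℓ / (1 - ℓ) := by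
    intro ν
    induction ν with
    | zero =>
        have h := hlip 0 z (x 0)
        rw [hfix 0] at h
        simp only [LFS, pow_one]
        linarith
    | succ n ih =>
        have h1 : dist (LFS f (n+1) z) (x (n+1)) ≤ ℓ * dist (LFS f n z) (x (n+1)) := by
          have := hlip (n+1) (LFS f n z) (x (n+1))
          rw [hfix (n+1)] at this
          simpa [LFS] using this
        have h2 : dist (LFS f n z) (x (n+1)) ≤ dist (LFS f n z) (x n) + M :=
          le_trans (dist_triangle _ (x n) _) (by linarith [hM n])
        have h3 : dist (LFS f (n+1) z) (x (n+1)) ≤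
            ℓ * (ℓ ^ (n+1) * dist z (x 0) + M * ℓ / (1 - ℓ) + M) := by
          calc dist (LFS f (n+1) z) (x (n+1)) ≤ ℓ * dist (LFS f n z) (x (n+1)) := h1
            _ ≤ ℓ * (ℓ ^ (n+1) * dist z (x 0) + M * ℓ / (1 - ℓ) + M) := by
                apply mul_le_mul_of_nonneg_left _ hℓ0.le
                linarith
        have heq : ℓ * (M * ℓ / (1 - ℓ) + M) = M * ℓ / (1 - ℓ) := by
          field_simp; ring
        calc dist (LFS f (n+1) z) (x (n+1))
            ≤ ℓ * (ℓ ^ (n+1) * dist z (x 0) + M * ℓ / (1 - ℓ) + M) := h3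
          _ = ℓ ^ (n+2) * dist z (x 0) + ℓ * (M * ℓ / (1 - ℓ) + M) := by ring
          _ = ℓ ^ (n+2) * dist z (x 0) + M * ℓ / (1 - ℓ) := by rw [heq]
  refine ⟨key, ⟨ℓ * dist z (x 0) + M * ℓ / (1 - ℓ), fun ν => ?_⟩⟩
  have hpow : ℓ ^ (ν + 1) ≤ ℓ := by
    calc ℓ ^ (ν + 1) ≤ ℓ ^ 1 := pow_le_pow_of_le_one hℓ0.le hℓ1.le (by omega)
      _ = ℓ := pow_one ℓ
  have := key ν
  nlinarith [dist_nonneg (x := z) (y := x 0)]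
end
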